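/- Let G = (V, E) be a finite connected simple undirected graph with graph distance dist, and let dcut : V → ℕ be an arbitrary assignment of cutoff values. For u ∈ V, let extdeg(u) = |{w ∈ V : w ≠ u and dist(u, w) ≤ dcut(u)}|. Define ν₃ : 2^V → ℝ by ν₃(∅) = 0 and, for C ≠ ∅, ν₃(C) = |{u ∈ V : min_{c ∈ C} dist(c, u) ≤ dcut(u)}|. Then for every v ∈ V, the Shapley value of v in the game (V, ν₃) equals Σ_{u ∈ V : dist(v, u) ≤ dcut(u)} 1 / (1 + extdeg(u)). -/

import Mathlib

/-!
The game counts the nodes `u` covered by a coalition, where `u` is covered as soon as the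
coalition meets its ball `S u = {c | dist c u ≤ dcut u}`, of size `1 + extdeg u`. So it is the
sum over `u` of the games "the coalition meets `S u`", and by additivity of the Shapley value it
suffices to treat one of them. There a player `i ∈ S` has marginal contribution `1` exactly on the
coalitions avoiding `S`, and the Shapley weights of the subsets of a set of `m` players in a game
of `n` players add up to `1 / (n - m)` by a telescoping sum; with `m = n - |S|` this is `1 / |S|`.
-/

open Finset
open scoped Classical

/-- The Shapley value of player `i` in the coalitional game with characteristic
function `ν` on the finite player set `α`. -/
noncomputable def shapley {α : Type*} [Fintype α] [DecidableEq α]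
    (ν : Finset α → ℝ) (i : α) : ℝ :=
  ∑ C ∈ (Finset.univ.erase i).powerset,
    ((C.card.factorial * (Fintype.card α - C.card - 1).factorial : ℝ) /
        ((Fintype.card α).factorial : ℝ)) * (ν (insert i C) - ν C)

open scoped Nat

lemma descFactorial_mul_factorial_telescope {m n k : ℕ} (hkm : k ≤ m) (hmn : m < n) :
    (m.descFactorial k * (n - k - 1)! : ℝ) * (n - m) =
      m.descFactorial k * (n - k)! - m.descFactorial (k + 1) * (n - (k + 1))! := by
  obtain ⟨l, rfl⟩ := Nat.exists_eq_add_of_le hkm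
  obtain ⟨j, rfl⟩ := Nat.exists_eq_add_of_lt hmn
  have hnk : k + l + j + 1 - k = j + l + 1 := by omega
  have hnk1 : k + l + j + 1 - k - 1 = j + l := by omega
  have hnk1' : k + l + j + 1 - (k + 1) = j + l := by omega
  rw [hnk1, hnk1', hnk, Nat.descFactorial_succ, Nat.factorial_succ, Nat.add_sub_cancel_left]
  push_cast
  ring

lemma sum_descFactorial_mul_factorial {m n : ℕ} (hmn : m < n) :
    ∑ k ∈ range (m + 1), (m.descFactorial k * (n - k - 1)! : ℝ) = n ! / (n - m) := by
  have hpos : (0 : ℝ) < n - m := by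
    rw [sub_pos]
    exact_mod_cast hmn
  rw [eq_div_iff hpos.ne', Finset.sum_mul,
    Finset.sum_congr rfl fun k hk =>
      descFactorial_mul_factorial_telescope (Nat.lt_succ_iff.mp (mem_range.mp hk)) hmn,
    Finset.sum_range_sub' (fun k => (m.descFactorial k * (n - k)! : ℝ))]
  simp

lemma sum_powerset_shapley_weight {α : Type*} [Fintype α] {T : Finset α}
    (hT : T.card < Fintype.card α) :
    ∑ C ∈ T.powerset,
        (C.card ! * (Fintype.card α - C.card - 1)! : ℝ) / (Fintype.card α)! =
      1 / (Fintype.card α - T.card) := by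
  rw [Finset.sum_powerset_apply_card
      (fun k => (k ! * (Fintype.card α - k - 1)! : ℝ) / (Fintype.card α)!),
    one_div, ← div_div_cancel_left' (Nat.cast_ne_zero.mpr (Fintype.card α).factorial_ne_zero),
    ← sum_descFactorial_mul_factorial hT, Finset.sum_div]
  refine Finset.sum_congr rfl fun k _ => ?_
  rw [nsmul_eq_mul, Nat.descFactorial_eq_factorial_mul_choose]
  push_cast
  ring

section Shapley

variable {α : Type*} [DecidableEq α]

noncomputable def hittingGame (S C : Finset α) : ℝ := if Disjoint S C then 0 else 1

lemma hittingGame_insert_sub (S C : Finset α) (i : α) :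
    hittingGame S (insert i C) - hittingGame S C = if i ∈ S ∧ Disjoint S C then 1 else 0 := by
  by_cases hi : i ∈ S <;> by_cases hSC : Disjoint S C <;>
    simp [hittingGame, hi, hSC, Finset.disjoint_insert_right]

variable [Fintype α]

lemma shapley_sum {ι : Type*} (s : Finset ι) (ν : ι → Finset α → ℝ) (i : α) :
    shapley (fun C => ∑ u ∈ s, ν u C) i = ∑ u ∈ s, shapley (ν u) i := by
  simp only [shapley, ← Finset.sum_sub_distrib, Finset.mul_sum]
  exact Finset.sum_comm

lemma powerset_erase_filter_disjoint {S : Finset α} {i : α} (hi : i ∈ S) :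
    {C ∈ (univ.erase i).powerset | Disjoint S C} = Sᶜ.powerset := by
  ext C
  simp only [mem_filter, mem_powerset, Finset.subset_compl_iff_disjoint_left]
  refine ⟨And.right, fun hSC => ⟨fun c hc => mem_erase.mpr ⟨?_, mem_univ c⟩, hSC⟩⟩
  rintro rfl
  exact Finset.disjoint_left.mp hSC hi hc

lemma shapley_hittingGame (S : Finset α) (i : α) :
    shapley (hittingGame S) i = if i ∈ S then 1 / (S.card : ℝ) else 0 := by
  simp only [shapley, hittingGame_insert_sub, mul_ite, mul_one, mul_zero]
  by_cases hi : i ∈ S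
  · have hcompl : Sᶜ.card < Fintype.card α := by
      rw [card_compl]
      exact Nat.sub_lt (Fintype.card_pos_iff.mpr ⟨i⟩) (card_pos.mpr ⟨i, hi⟩)
    simp only [hi, true_and, if_true]
    rw [← Finset.sum_filter, powerset_erase_filter_disjoint hi,
      sum_powerset_shapley_weight hcompl, card_compl,
      Nat.cast_sub (card_le_univ S), sub_sub_cancel]
  · simp [hi]

end Shapley

theorem shapley_cutoff_distance_game_general {V : Type*} [Fintype V]
    (G : SimpleGraph V) (dcut : V → ℕ)
    (extdeg : V → ℕ)
    (hext : ∀ u : V,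
      extdeg u = (Finset.univ.filter (fun w => w ≠ u ∧ G.dist u w ≤ dcut u)).card)
    (ν : Finset V → ℝ)
    (hν : ∀ C : Finset V,
      ν C = ((Finset.univ.filter (fun u => ∃ c ∈ C, G.dist c u ≤ dcut u)).card : ℝ))
    (v : V) :
    shapley ν v
      = ∑ u ∈ Finset.univ.filter (fun u => G.dist v u ≤ dcut u),
          1 / (1 + (extdeg u : ℝ)) := by
  set ball : V → Finset V := fun u => ({c | G.dist c u ≤ dcut u} : Finset V)
  have hball_card (u : V) : (ball u).card = 1 + extdeg u := by
    have : ball u = insert u ({w | w ≠ u ∧ G.dist u w ≤ dcut u} : Finset V) := by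
      ext c
      by_cases hcu : c = u <;> simp [ball, hcu, G.dist_comm]
    rw [this, card_insert_of_notMem (by simp), hext, add_comm]
  have hν_sum : ν = fun C => ∑ u, hittingGame (ball u) C := by
    ext C
    rw [hν, card_filter, Nat.cast_sum]
    refine Finset.sum_congr rfl fun u _ => ?_
    have hmeet : ¬Disjoint (ball u) C ↔ ∃ c ∈ C, G.dist c u ≤ dcut u := by
      simp [ball, not_disjoint_iff, and_comm]
    by_cases h : Disjoint (ball u) C <;> simp [hittingGame, h, ← hmeet]
  rw [hν_sum, shapley_sum, Finset.sum_filter]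
  refine Finset.sum_congr rfl fun u _ => ?_
  simp [shapley_hittingGame, ball, hball_card]

/-- For a connected graph with node-dependent distance cutoffs `dcut`, in the game
where `ν(C)` counts nodes `u` within distance `dcut u` of `C`, the Shapley value of
`v` equals `Σ_{u : dist(v,u) ≤ dcut u} 1/(1 + extdeg u)`, where
`extdeg u = |{w ≠ u : dist(u,w) ≤ dcut u}|`. -/
theorem shapley_cutoff_distance_game {V : Type*} [Fintype V]
    (G : SimpleGraph V) (hG : G.Connected) (dcut : V → ℕ)
    (extdeg : V → ℕ)
    (hext : ∀ u : V,
      extdeg u = (Finset.univ.filter (fun w => w ≠ u ∧ G.dist u w ≤ dcut u)).card)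
    (ν : Finset V → ℝ)
    (hν : ∀ C : Finset V,
      ν C = ((Finset.univ.filter (fun u => ∃ c ∈ C, G.dist c u ≤ dcut u)).card : ℝ))
    (v : V) :
    shapley ν v
      = ∑ u ∈ Finset.univ.filter (fun u => G.dist v u ≤ dcut u),
          1 / (1 + (extdeg u : ℝ)) :=
  shapley_cutoff_distance_game_general G dcut extdeg hext ν hν v
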